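/- arXiv:math/0612640 — 6 statements merged into one kernel-verified Lean document; each statement's English description precedes it below -/
import Mathlib

section
/- If a, b are integers with a + b = 1 such that (6a - 5b + 104)/11 and (-5a + 6b + 104)/11 are both nonnegative integers, then the pair (a, b) belongs to the 20-element set {(k, 1-k) : k ∈ ℤ, -9 ≤ k ≤ 10}. -/
theorem stmt_2 (a b : ℤ) (hsum : a + b = 1)
    (h1 : (11 : ℤ) ∣ (6*a - 5*b + 104) ∧ 0 ≤ 6*a - 5*b + 104)
    (h2 : (11 : ℤ) ∣ (-5*a + 6*b + 104) ∧ 0 ≤ -5*a + 6*b + 104) :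
    ∃ k : ℤ, -9 ≤ k ∧ k ≤ 10 ∧ a = k ∧ b = 1 - k := by
  exact ⟨a, by omega, by omega, rfl, by omega⟩
end

section
/- If a, b are integers with a + b = 1 such that (12a - 11b + 11)/23 and (-11a + 12b + 11)/23 are both nonnegative integers, then (a, b) ∈ {(1,0), (0,1)}. -/
theorem stmt_3 (a b : ℤ) (hsum : a + b = 1)
    (h1 : (23 : ℤ) ∣ (12*a - 11*b + 11) ∧ 0 ≤ 12*a - 11*b + 11)
    (h2 : (23 : ℤ) ∣ (-11*a + 12*b + 11) ∧ 0 ≤ -11*a + 12*b + 11) :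
    (a, b) = (1, 0) ∨ (a, b) = (0, 1) := by simp only [Prod.mk.injEq]; omega
end

section
/- There are no integers ν3, ν7a, ν7b with ν3 + ν7a + ν7b = 1 such that (36ν3 + 27)/21, (-18ν3 + 18)/21, and (ν3 + 279)/21 are all nonnegative integers. -/
theorem stmt_5 :
    ¬ ∃ ν3 ν7a ν7b : ℤ, ν3 + ν7a + ν7b = 1 ∧
      ((21 : ℤ) ∣ (36*ν3 + 27) ∧ 0 ≤ 36*ν3 + 27) ∧
      ((21 : ℤ) ∣ (-18*ν3 + 18) ∧ 0 ≤ -18*ν3 + 18) ∧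
      ((21 : ℤ) ∣ (ν3 + 279) ∧ 0 ≤ ν3 + 279) := by
  rintro ⟨a, b, c, h1, ⟨d1, p1⟩, ⟨d2, p2⟩, ⟨d3, p3⟩⟩
  omega
end

section
/- There is no integer ν5 such that (24ν5 + 25)/35 and (-6ν5 + 20)/35 are both nonnegative integers. -/
theorem stmt_8 :
    ¬ ∃ ν5 : ℤ,
      ((35 : ℤ) ∣ (24*ν5 + 25) ∧ 0 ≤ 24*ν5 + 25) ∧
      ((35 : ℤ) ∣ (-6*ν5 + 20) ∧ 0 ≤ -6*ν5 + 20) := by rintro ⟨ν, ⟨h1, h2⟩, h3, h4⟩; omega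
end

section
/- If ν3, ν5, ν15a, ν15b are integers with ν3 + ν5 + ν15a + ν15b = 1 such that the quantities (-40ν3+210)/15, (20ν3+225)/15, (-24ν5+240)/15, (12ν5+240)/15, (40ν3+240)/15, (32ν3+16ν5-8ν15a-8ν15b+38)/15, (-8ν3-4ν5+2ν15a+2ν15b+28)/15, (-16ν3-8ν5+4ν15a+4ν15b+26)/15, (-3ν3+ν5+7ν15a-8ν15b+233)/15, (-3ν3+ν5-8ν15a+7ν15b+233)/15, (2ν3+ν5+7ν15a-8ν15b+8)/15, (2ν3+ν5-8ν15a+7ν15b+8)/15, (8ν3-16ν5+8ν15a+8ν15b+202)/15, (ν3+6ν15a-9ν15b+279)/15, and (-ν3-6ν15a+9ν15b+666)/15 are all nonnegative integers, then (ν3, ν5, ν15a, ν15b) ∈ {(-3,5,-1,0), (-3,5,0,-1), (0,0,0,1), (0,0,1,0), (3,-5,1,2), (3,-5,2,1)}. -/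
set_option maxHeartbeats 4000000

private lemma aux3' (x : ℤ) (h : (15 : ℤ) ∣ 20*x + 225) : (3 : ℤ) ∣ x := by omega

private lemma aux5' (x : ℤ) (h : (15 : ℤ) ∣ 12*x + 240) : (5 : ℤ) ∣ x := by omega

theorem stmt_16 (ν3 ν5 ν15a ν15b : ℤ) (hsum : ν3 + ν5 + ν15a + ν15b = 1)
    (h1 : (15 : ℤ) ∣ (-40*ν3 + 210) ∧ 0 ≤ -40*ν3 + 210)
    (h2 : (15 : ℤ) ∣ (20*ν3 + 225) ∧ 0 ≤ 20*ν3 + 225)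
    (h3 : (15 : ℤ) ∣ (-24*ν5 + 240) ∧ 0 ≤ -24*ν5 + 240)
    (h4 : (15 : ℤ) ∣ (12*ν5 + 240) ∧ 0 ≤ 12*ν5 + 240)
    (h5 : (15 : ℤ) ∣ (40*ν3 + 240) ∧ 0 ≤ 40*ν3 + 240)
    (h6 : (15 : ℤ) ∣ (32*ν3 + 16*ν5 - 8*ν15a - 8*ν15b + 38) ∧ 0 ≤ 32*ν3 + 16*ν5 - 8*ν15a - 8*ν15b + 38)
    (h7 : (15 : ℤ) ∣ (-8*ν3 - 4*ν5 + 2*ν15a + 2*ν15b + 28) ∧ 0 ≤ -8*ν3 - 4*ν5 + 2*ν15a + 2*ν15b + 28)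
    (h8 : (15 : ℤ) ∣ (-16*ν3 - 8*ν5 + 4*ν15a + 4*ν15b + 26) ∧ 0 ≤ -16*ν3 - 8*ν5 + 4*ν15a + 4*ν15b + 26)
    (h9 : (15 : ℤ) ∣ (-3*ν3 + ν5 + 7*ν15a - 8*ν15b + 233) ∧ 0 ≤ -3*ν3 + ν5 + 7*ν15a - 8*ν15b + 233)
    (h10 : (15 : ℤ) ∣ (-3*ν3 + ν5 - 8*ν15a + 7*ν15b + 233) ∧ 0 ≤ -3*ν3 + ν5 - 8*ν15a + 7*ν15b + 233)
    (h11 : (15 : ℤ) ∣ (2*ν3 + ν5 + 7*ν15a - 8*ν15b + 8) ∧ 0 ≤ 2*ν3 + ν5 + 7*ν15a - 8*ν15b + 8)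
    (h12 : (15 : ℤ) ∣ (2*ν3 + ν5 - 8*ν15a + 7*ν15b + 8) ∧ 0 ≤ 2*ν3 + ν5 - 8*ν15a + 7*ν15b + 8)
    (h13 : (15 : ℤ) ∣ (8*ν3 - 16*ν5 + 8*ν15a + 8*ν15b + 202) ∧ 0 ≤ 8*ν3 - 16*ν5 + 8*ν15a + 8*ν15b + 202)
    (h14 : (15 : ℤ) ∣ (ν3 + 6*ν15a - 9*ν15b + 279) ∧ 0 ≤ ν3 + 6*ν15a - 9*ν15b + 279)
    (h15 : (15 : ℤ) ∣ (-ν3 - 6*ν15a + 9*ν15b + 666) ∧ 0 ≤ -ν3 - 6*ν15a + 9*ν15b + 666) :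
    (ν3, ν5, ν15a, ν15b) ∈ ({(-3,5,-1,0), (-3,5,0,-1), (0,0,0,1), (0,0,1,0), (3,-5,1,2), (3,-5,2,1)} :
      Set (ℤ × ℤ × ℤ × ℤ)) := by
  obtain ⟨d1, b1⟩ := h1
  obtain ⟨d2, b2⟩ := h2
  obtain ⟨d3, b3⟩ := h3
  obtain ⟨d4, b4⟩ := h4
  obtain ⟨d5, b5⟩ := h5
  obtain ⟨d6, b6⟩ := h6
  obtain ⟨d7, b7⟩ := h7
  obtain ⟨d8, b8⟩ := h8
  obtain ⟨d9, b9⟩ := h9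
  obtain ⟨d10, b10⟩ := h10
  obtain ⟨d11, b11⟩ := h11
  obtain ⟨d12, b12⟩ := h12
  obtain ⟨d13, b13⟩ := h13
  obtain ⟨d14, b14⟩ := h14
  obtain ⟨d15, b15⟩ := h15
  have e3 : (3 : ℤ) ∣ ν3 := aux3' ν3 d2
  have e5 : (5 : ℤ) ∣ ν5 := aux5' ν5 d4
  have l3a : -6 ≤ ν3 := by linarith
  have l3b : ν3 ≤ 5 := by linarith
  have l5a : -20 ≤ ν5 := by linarith
  have l5b : ν5 ≤ 10 := by linarith
  clear d1 d2 d3 d4 d5 d6 d7 d8 d9 d10 d11 d12 d13 d14 d15 b1 b2 b3 b4 b5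
  simp only [Set.mem_insert_iff, Set.mem_singleton_iff, Prod.mk.injEq]
  obtain ⟨a, rfl⟩ := e3
  obtain ⟨b, rfl⟩ := e5
  have ha1 : -2 ≤ a := by linarith
  have ha2 : a ≤ 1 := by linarith
  have hb1 : -4 ≤ b := by linarith
  have hb2 : b ≤ 2 := by linarith
  interval_cases a <;> interval_cases b <;> omega
end

section
/- If ν2, ν3, ν6 are integers with ν2 + ν3 + ν6 = 1 such that (-6ν2+42)/6, (6ν2+48)/6, (-8ν3+888)/6, (8ν3+888)/6, (6ν2+4ν3+12)/6, (-6ν2-4ν3+24)/6, (22ν2+5ν3+ν6+203)/6, (32ν2+2ν3+2ν6+226)/6, and (-10ν2-6ν3+2ν6+22)/6 are all nonnegative integers, then (ν2, ν3, ν6) belongs to the 21-element set {(0,0,1), (4,-6,3), (-6,6,1), (-6,9,-2), (-6,12,-5), (-4,3,2), (-4,6,-1), (-4,9,-4), (-2,0,3), (-2,3,0), (-2,6,-3), (0,-3,4), (0,3,-2), (2,-6,5), (2,-3,2), (2,0,-1), (4,-9,6), (4,-3,0), (6,-12,7), (6,-9,4), (6,-6,1)}. -/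
lemma aux3 (a b : ℤ) (h : (6:ℤ) ∣ 6*a + 4*b + 12) : (3:ℤ) ∣ b := by omega

lemma aux2 (a b c : ℤ) (hs : a + b + c = 1) (h : (6:ℤ) ∣ 22*a + 5*b + c + 203) :
    (2:ℤ) ∣ a := by omega

set_option maxHeartbeats 10000000 in
theorem stmt_17 (ν2 ν3 ν6 : ℤ) (hsum : ν2 + ν3 + ν6 = 1)
    (h1 : (6 : ℤ) ∣ (-6*ν2 + 42) ∧ 0 ≤ -6*ν2 + 42)
    (h2 : (6 : ℤ) ∣ (6*ν2 + 48) ∧ 0 ≤ 6*ν2 + 48)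
    (h3 : (6 : ℤ) ∣ (-8*ν3 + 888) ∧ 0 ≤ -8*ν3 + 888)
    (h4 : (6 : ℤ) ∣ (8*ν3 + 888) ∧ 0 ≤ 8*ν3 + 888)
    (h5 : (6 : ℤ) ∣ (6*ν2 + 4*ν3 + 12) ∧ 0 ≤ 6*ν2 + 4*ν3 + 12)
    (h6 : (6 : ℤ) ∣ (-6*ν2 - 4*ν3 + 24) ∧ 0 ≤ -6*ν2 - 4*ν3 + 24)
    (h7 : (6 : ℤ) ∣ (22*ν2 + 5*ν3 + ν6 + 203) ∧ 0 ≤ 22*ν2 + 5*ν3 + ν6 + 203)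
    (h8 : (6 : ℤ) ∣ (32*ν2 + 2*ν3 + 2*ν6 + 226) ∧ 0 ≤ 32*ν2 + 2*ν3 + 2*ν6 + 226)
    (h9 : (6 : ℤ) ∣ (-10*ν2 - 6*ν3 + 2*ν6 + 22) ∧ 0 ≤ -10*ν2 - 6*ν3 + 2*ν6 + 22) :
    (ν2, ν3, ν6) ∈ ({(0,0,1), (4,-6,3), (-6,6,1), (-6,9,-2), (-6,12,-5), (-4,3,2), (-4,6,-1),
      (-4,9,-4), (-2,0,3), (-2,3,0), (-2,6,-3), (0,-3,4), (0,3,-2), (2,-6,5), (2,-3,2),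
      (2,0,-1), (4,-9,6), (4,-3,0), (6,-12,7), (6,-9,4), (6,-6,1)} : Set (ℤ × ℤ × ℤ)) := by
  obtain ⟨d1,l1⟩ := h1; obtain ⟨d2,l2⟩ := h2; obtain ⟨d3,l3⟩ := h3
  obtain ⟨d4,l4⟩ := h4; obtain ⟨d5,l5⟩ := h5; obtain ⟨d6,l6⟩ := h6
  obtain ⟨d7,l7⟩ := h7; obtain ⟨d8,l8⟩ := h8; obtain ⟨d9,l9⟩ := h9
  obtain ⟨k, hk⟩ := aux3 ν2 ν3 d5
  obtain ⟨j, hj⟩ := aux2 ν2 ν3 ν6 hsum d7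
  subst hk hj
  have hj1 : -3 ≤ j := by omega
  have hj2 : j ≤ 3 := by omega
  have hk1 : -1 - j ≤ k := by omega
  have hk2 : k ≤ 1 - j := by omega
  have h6 : ν6 = 1 - 2*j - 3*k := by omega
  clear d1 d2 d3 d4 d5 d6 d7 d8 d9 l1 l2 l3 l4 l5 l6 l7 l8 l9 hsum
  subst h6
  simp only [Set.mem_insert_iff, Set.mem_singleton_iff, Prod.mk.injEq]
  interval_cases j <;> interval_cases k <;> norm_num
end
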